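/- There is a constant C > 0 with the following property. Let u : ℝ² → ℝ² be a C^∞, compactly supported, divergence-free vector field and define Γ̄(l) := ⨍_{𝕊} ∫_{ℝ²} u(x) · u(x+ln) dx dn for l ≥ 0. Then |Γ̄(l) − Γ̄(0)| ≤ C l² ∫_{ℝ²} |∇u(x)|² dx for every l ≥ 0. -/

import Mathlib

/-! STATEMENT 9: `|Γ̄(l) − Γ̄(0)| ≤ C l² ∫ |∇u|²` for all `l ≥ 0`, with `C` uniform in `u`. -/

open MeasureTheory

noncomputable section

/-- The plane `ℝ²`. -/
abbrev E2 : Type := EuclideanSpace ℝ (Fin 2)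

/-- Partial derivative `∂ᵢ f` of a scalar function on `ℝ²`. -/
def pd (i : Fin 2) (f : E2 → ℝ) (x : E2) : ℝ :=
  fderiv ℝ f x (EuclideanSpace.single i 1)

/-- `|∇u(x)|² = (∂₁u¹)² + (∂₂u²)² + (∂₁u²)² + (∂₂u¹)²`. -/
def gradSq (u : E2 → E2) (x : E2) : ℝ :=
  (pd 0 (fun y => u y 0) x) ^ 2 + (pd 1 (fun y => u y 1) x) ^ 2
    + (pd 0 (fun y => u y 1) x) ^ 2 + (pd 1 (fun y => u y 0) x) ^ 2

/-- The arc-length (surface) measure on the unit circle `𝕊 ⊂ ℝ²`.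
Averaging `⨍` against it is averaging with respect to the uniform
probability measure on `𝕊`. -/
def sphσ : Measure (Metric.sphere (0 : E2) 1) := (volume : Measure E2).toSphere

/-- `Γ̄(l) := ⨍_𝕊 ∫_{ℝ²} u(x) · u(x+ln) dx dn`. -/
def GammaBar (u : E2 → E2) (l : ℝ) : ℝ :=
  ⨍ n : Metric.sphere (0 : E2) 1,
    (∫ x : E2, (inner ℝ (u x) (u (x + l • (n : E2))) : ℝ)) ∂sphσ

open Metric intervalIntegral
open scoped ENNReal

private lemma e2_norm_sq (v : E2) : ‖v‖ ^ 2 = v 0 ^ 2 + v 1 ^ 2 := by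
  rw [EuclideanSpace.norm_eq, Real.sq_sqrt (by positivity)]
  simp [Fin.sum_univ_two, sq_abs]

private lemma e2_decomp (h : E2) : h = h 0 • EuclideanSpace.single 0 1 + h 1 • EuclideanSpace.single 1 1 := by
  ext i; fin_cases i <;> simp [EuclideanSpace.single_apply]

private lemma pd_eq (u : E2 → E2) (hu : Differentiable ℝ u) (i j : Fin 2) (x : E2) :
    pd i (fun y => u y j) x = fderiv ℝ u x (EuclideanSpace.single i 1) j := by
  have : (fun y => u y j) = fun y => (EuclideanSpace.proj (𝕜 := ℝ) j) (u y) := rfl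
  rw [pd, this, fderiv_comp' x (EuclideanSpace.proj (𝕜 := ℝ) j).differentiableAt (hu x),
    ContinuousLinearMap.fderiv]
  rfl

private lemma gradSq_eq (u : E2 → E2) (hu : Differentiable ℝ u) (x : E2) :
    gradSq u x = (fderiv ℝ u x (EuclideanSpace.single 0 1) 0) ^ 2
      + (fderiv ℝ u x (EuclideanSpace.single 1 1) 1) ^ 2
      + (fderiv ℝ u x (EuclideanSpace.single 0 1) 1) ^ 2
      + (fderiv ℝ u x (EuclideanSpace.single 1 1) 0) ^ 2 := by
  simp [gradSq, pd_eq u hu]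

private lemma fderiv_apply_sq_le (u : E2 → E2) (hu : Differentiable ℝ u) (x h : E2) :
    ‖fderiv ℝ u x h‖ ^ 2 ≤ ‖h‖ ^ 2 * gradSq u x := by
  set D := fderiv ℝ u x with hD
  have hDh : D h = h 0 • D (EuclideanSpace.single 0 1) + h 1 • D (EuclideanSpace.single 1 1) := by
    conv_lhs => rw [e2_decomp h]
    simp
  have h0 : D h 0 = h 0 * D (EuclideanSpace.single 0 1) 0 + h 1 * D (EuclideanSpace.single 1 1) 0 := by
    rw [hDh]; rfl
  have h1 : D h 1 = h 0 * D (EuclideanSpace.single 0 1) 1 + h 1 * D (EuclideanSpace.single 1 1) 1 := by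
    rw [hDh]; rfl
  rw [e2_norm_sq, e2_norm_sq, gradSq_eq u hu, h0, h1, ← hD]
  set a := h 0; set b := h 1
  set p := D (EuclideanSpace.single 0 1) 0; set q := D (EuclideanSpace.single 1 1) 0
  set r := D (EuclideanSpace.single 0 1) 1; set s := D (EuclideanSpace.single 1 1) 1
  nlinarith [sq_nonneg (a*q - b*p), sq_nonneg (a*s - b*r), sq_nonneg a, sq_nonneg b,
    sq_nonneg p, sq_nonneg q, sq_nonneg r, sq_nonneg s]

private lemma ftc (u : E2 → E2) (hu : ContDiff ℝ (⊤ : ℕ∞) u) (x h : E2) :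
    u (x + h) - u x = ∫ t in (0:ℝ)..1, fderiv ℝ u (x + t • h) h := by
  have hcont : Continuous fun t : ℝ => fderiv ℝ u (x + t • h) h :=
    ((hu.continuous_fderiv (by simp)).comp
      (continuous_const.add (continuous_id.smul continuous_const))).clm_apply continuous_const
  have := intervalIntegral.integral_eq_sub_of_hasDerivAt (a := (0:ℝ)) (b := 1)
    (f := fun s : ℝ => u (x + s • h)) (f' := fun t => fderiv ℝ u (x + t • h) h)
    (fun t _ => by
      have h1 : HasDerivAt (fun s : ℝ => x + s • h) h t := by
        simpa using ((hasDerivAt_id t).smul_const h).const_add x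
      exact ((hu.differentiable (by simp) (x + t • h)).hasFDerivAt).comp_hasDerivAt t h1)
    (hcont.intervalIntegrable 0 1)
  rw [this]; simp

private lemma jensen (f : ℝ → E2) (hf : Continuous f) :
    ‖∫ t in (0:ℝ)..1, f t‖ ^ 2 ≤ ∫ t in (0:ℝ)..1, ‖f t‖ ^ 2 := by
  haveI : IsProbabilityMeasure (volume.restrict (Set.Ioc (0:ℝ) 1)) :=
    ⟨by simp⟩
  set μ := volume.restrict (Set.Ioc (0:ℝ) 1)
  have hXc : Continuous fun t => ‖f t‖ := hf.norm
  obtain ⟨M, hM⟩ : ∃ M, ∀ t ∈ Set.Icc (0:ℝ) 1, ‖f t‖ ≤ M := by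
    obtain ⟨M, hM⟩ := (isCompact_Icc.image hXc).bddAbove
    exact ⟨M, fun t ht => hM ⟨t, ht, rfl⟩⟩
  have hmem : MemLp (fun t => ‖f t‖) 2 μ := by
    refine MemLp.of_bound (hXc.aestronglyMeasurable.restrict) (max M 0) ?_
    filter_upwards [ae_restrict_mem measurableSet_Ioc] with t ht
    rw [Real.norm_eq_abs, abs_of_nonneg (norm_nonneg _)]
    exact le_max_of_le_left (hM t ⟨ht.1.le, ht.2⟩)
  have hvar := ProbabilityTheory.variance_nonneg (fun t => ‖f t‖) μ
  rw [ProbabilityTheory.variance_eq_sub hmem] at hvar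
  simp only [Pi.pow_apply] at hvar
  have h1 : ‖∫ t in (0:ℝ)..1, f t‖ ≤ ∫ t in (0:ℝ)..1, ‖f t‖ :=
    intervalIntegral.norm_integral_le_integral_norm (by norm_num)
  have h2 : (∫ t in (0:ℝ)..1, ‖f t‖) = ∫ t, ‖f t‖ ∂μ := by
    rw [intervalIntegral.integral_of_le (by norm_num)]
  have h3 : (∫ t in (0:ℝ)..1, ‖f t‖ ^ 2) = ∫ t, ‖f t‖ ^ 2 ∂μ := by
    rw [intervalIntegral.integral_of_le (by norm_num)]
  calc ‖∫ t in (0:ℝ)..1, f t‖ ^ 2 ≤ (∫ t in (0:ℝ)..1, ‖f t‖) ^ 2 := by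
        have h0 : (0:ℝ) ≤ ∫ t in (0:ℝ)..1, ‖f t‖ := le_trans (norm_nonneg _) h1
        exact pow_le_pow_left₀ (norm_nonneg _) h1 2
    _ ≤ ∫ t in (0:ℝ)..1, ‖f t‖ ^ 2 := by
        rw [h2, h3]
        linarith

private lemma gradSq_nonneg (u : E2 → E2) (x : E2) : 0 ≤ gradSq u x := by unfold gradSq; positivity

private lemma gradSq_continuous (u : E2 → E2) (hu : ContDiff ℝ (⊤ : ℕ∞) u) : Continuous (gradSq u) := by
  have hd : Differentiable ℝ u := hu.differentiable (by simp)
  have hc : Continuous (fderiv ℝ u) := hu.continuous_fderiv (by simp)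
  have hcomp : ∀ i j : Fin 2, Continuous fun x => fderiv ℝ u x (EuclideanSpace.single i 1) j :=
    fun i j => (EuclideanSpace.proj (𝕜 := ℝ) j).continuous.comp (hc.clm_apply continuous_const)
  have heq : gradSq u = fun x => (fderiv ℝ u x (EuclideanSpace.single 0 1) 0) ^ 2
      + (fderiv ℝ u x (EuclideanSpace.single 1 1) 1) ^ 2
      + (fderiv ℝ u x (EuclideanSpace.single 0 1) 1) ^ 2
      + (fderiv ℝ u x (EuclideanSpace.single 1 1) 0) ^ 2 :=
    funext fun x => gradSq_eq u hd x
  rw [heq]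
  continuity

private lemma gradSq_support (u : E2 → E2) (hu : ContDiff ℝ (⊤ : ℕ∞) u) : Function.support (gradSq u) ⊆ tsupport u := by
  intro x hx
  by_contra hxn
  apply hx
  have h0 : fderiv ℝ u x = 0 := by
    have : u =ᶠ[nhds x] 0 := by
      filter_upwards [IsOpen.mem_nhds (isOpen_compl_iff.mpr (isClosed_tsupport u)) hxn] with y hy
      exact image_eq_zero_of_notMem_tsupport hy
    rw [this.fderiv_eq]
    exact fderiv_const_apply 0
  rw [gradSq_eq u (hu.differentiable (by simp)) x, h0]
  simp

private lemma gradSq_hcs (u : E2 → E2) (hu : ContDiff ℝ (⊤ : ℕ∞) u) (hs : HasCompactSupport u) :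
    HasCompactSupport (gradSq u) := by
  have h1 : tsupport (gradSq u) ⊆ tsupport u :=
    closure_minimal (gradSq_support u hu) (isClosed_tsupport u)
  exact IsCompact.of_isClosed_subset hs (isClosed_tsupport _) h1

private lemma key_L2_bound (u : E2 → E2) (hu : ContDiff ℝ (⊤ : ℕ∞) u) (hs : HasCompactSupport u) (h : E2) :
    ∫ x : E2, ‖u (x + h) - u x‖ ^ 2 ≤ ‖h‖ ^ 2 * ∫ x : E2, gradSq u x := by
  have hd : Differentiable ℝ u := hu.differentiable (by simp)
  have hGc : Continuous (gradSq u) := gradSq_continuous u hu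
  have hGint : Integrable (gradSq u) := hGc.integrable_of_hasCompactSupport (gradSq_hcs u hu hs)
  have huc : Continuous u := hu.continuous
  -- the difference function
  have hdc : Continuous fun x : E2 => u (x + h) - u x :=
    (huc.comp (continuous_id.add continuous_const)).sub huc
  have hdcs : HasCompactSupport fun x : E2 => u (x + h) - u x := by
    have h1 : HasCompactSupport fun x : E2 => u (x + h) :=
      hs.comp_homeomorph (Homeomorph.addRight h)
    exact h1.comp₂_left hs (sub_zero 0)
  have hfc : Continuous fun x : E2 => ‖u (x + h) - u x‖ ^ 2 := (hdc.norm).pow 2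
  have hfcs : HasCompactSupport fun x : E2 => ‖u (x + h) - u x‖ ^ 2 := by
    apply hdcs.mono
    intro x hx
    simp only [Function.mem_support] at hx ⊢
    intro hzero
    exact hx (by simp [hzero])
  have hfint : Integrable fun x : E2 => ‖u (x + h) - u x‖ ^ 2 :=
    hfc.integrable_of_hasCompactSupport hfcs
  -- pointwise bound
  have hpoint : ∀ x : E2, ‖u (x + h) - u x‖ ^ 2
      ≤ ‖h‖ ^ 2 * ∫ t in Set.Ioc (0:ℝ) 1, gradSq u (x + t • h) := by
    intro x
    have hcont : Continuous fun t : ℝ => fderiv ℝ u (x + t • h) h :=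
      ((hu.continuous_fderiv (by simp)).comp
        (continuous_const.add (continuous_id.smul continuous_const))).clm_apply continuous_const
    have hGt : Continuous fun t : ℝ => gradSq u (x + t • h) :=
      hGc.comp (continuous_const.add (continuous_id.smul continuous_const))
    calc ‖u (x + h) - u x‖ ^ 2
        = ‖∫ t in (0:ℝ)..1, fderiv ℝ u (x + t • h) h‖ ^ 2 := by rw [← ftc u hu x h]
      _ ≤ ∫ t in (0:ℝ)..1, ‖fderiv ℝ u (x + t • h) h‖ ^ 2 := jensen _ hcont
      _ ≤ ∫ t in (0:ℝ)..1, ‖h‖ ^ 2 * gradSq u (x + t • h) := by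
          apply intervalIntegral.integral_mono_on (by norm_num)
          · exact ((hcont.norm.pow 2)).intervalIntegrable 0 1
          · exact (continuous_const.mul hGt).intervalIntegrable 0 1
          · exact fun t _ => fderiv_apply_sq_le u hd _ h
      _ = ‖h‖ ^ 2 * ∫ t in (0:ℝ)..1, gradSq u (x + t • h) := intervalIntegral.integral_const_mul _ _
      _ = ‖h‖ ^ 2 * ∫ t in Set.Ioc (0:ℝ) 1, gradSq u (x + t • h) := by
          rw [intervalIntegral.integral_of_le (by norm_num)]
  -- move to lintegrals
  set LG : ℝ≥0∞ := ∫⁻ x : E2, ENNReal.ofReal (gradSq u x) with hLGdef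
  have hLG : LG = ENNReal.ofReal (∫ x : E2, gradSq u x) :=
    (ofReal_integral_eq_lintegral_ofReal hGint
      (Filter.Eventually.of_forall (gradSq_nonneg u))).symm
  have hLGne : LG ≠ ⊤ := by rw [hLG]; exact ENNReal.ofReal_ne_top
  have hswap : (∫⁻ x : E2, ∫⁻ t in Set.Ioc (0:ℝ) 1, ENNReal.ofReal (gradSq u (x + t • h)))
      = ∫⁻ t in Set.Ioc (0:ℝ) 1, ∫⁻ x : E2, ENNReal.ofReal (gradSq u (x + t • h)) := by
    apply lintegral_lintegral_swap
    apply (ENNReal.measurable_ofReal.comp ?_).aemeasurable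
    exact (hGc.comp ((continuous_fst.add (continuous_snd.smul continuous_const)))).measurable
  have htrans : ∀ t : ℝ, (∫⁻ x : E2, ENNReal.ofReal (gradSq u (x + t • h))) = LG := by
    intro t
    exact lintegral_add_right_eq_self (fun x => ENNReal.ofReal (gradSq u x)) (t • h)
  have hmain : (∫⁻ x : E2, ENNReal.ofReal (‖u (x + h) - u x‖ ^ 2))
      ≤ ENNReal.ofReal (‖h‖ ^ 2) * LG := by
    have hstep : ∀ x : E2, ENNReal.ofReal (‖u (x + h) - u x‖ ^ 2)
        ≤ ENNReal.ofReal (‖h‖ ^ 2) * ∫⁻ t in Set.Ioc (0:ℝ) 1, ENNReal.ofReal (gradSq u (x + t • h)) := by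
      intro x
      have hGt : Continuous fun t : ℝ => gradSq u (x + t • h) :=
        hGc.comp (continuous_const.add (continuous_id.smul continuous_const))
      have hGtint : IntegrableOn (fun t : ℝ => gradSq u (x + t • h)) (Set.Ioc 0 1) :=
        hGt.integrableOn_Ioc
      have hphi : ENNReal.ofReal (∫ t in Set.Ioc (0:ℝ) 1, gradSq u (x + t • h))
          = ∫⁻ t in Set.Ioc (0:ℝ) 1, ENNReal.ofReal (gradSq u (x + t • h)) :=
        ofReal_integral_eq_lintegral_ofReal hGtint
          (Filter.Eventually.of_forall fun t => gradSq_nonneg u _)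
      calc ENNReal.ofReal (‖u (x + h) - u x‖ ^ 2)
          ≤ ENNReal.ofReal (‖h‖ ^ 2 * ∫ t in Set.Ioc (0:ℝ) 1, gradSq u (x + t • h)) :=
            ENNReal.ofReal_le_ofReal (hpoint x)
        _ = ENNReal.ofReal (‖h‖ ^ 2) * ENNReal.ofReal (∫ t in Set.Ioc (0:ℝ) 1, gradSq u (x + t • h)) :=
            ENNReal.ofReal_mul (by positivity)
        _ = _ := by rw [hphi]
    calc (∫⁻ x : E2, ENNReal.ofReal (‖u (x + h) - u x‖ ^ 2))
        ≤ ∫⁻ x : E2, ENNReal.ofReal (‖h‖ ^ 2)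
            * ∫⁻ t in Set.Ioc (0:ℝ) 1, ENNReal.ofReal (gradSq u (x + t • h)) :=
          lintegral_mono hstep
      _ = ENNReal.ofReal (‖h‖ ^ 2)
            * ∫⁻ x : E2, ∫⁻ t in Set.Ioc (0:ℝ) 1, ENNReal.ofReal (gradSq u (x + t • h)) :=
          lintegral_const_mul' _ _ ENNReal.ofReal_ne_top
      _ = ENNReal.ofReal (‖h‖ ^ 2)
            * ∫⁻ t in Set.Ioc (0:ℝ) 1, ∫⁻ x : E2, ENNReal.ofReal (gradSq u (x + t • h)) := by
          rw [hswap]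
      _ = ENNReal.ofReal (‖h‖ ^ 2) * ∫⁻ t in Set.Ioc (0:ℝ) 1, LG := by
          rw [lintegral_congr fun t => htrans t]
      _ = ENNReal.ofReal (‖h‖ ^ 2) * LG := by
          rw [setLIntegral_const, Real.volume_Ioc]
          simp
  -- back to real integrals
  have heq : ∫ x : E2, ‖u (x + h) - u x‖ ^ 2
      = (∫⁻ x : E2, ENNReal.ofReal (‖u (x + h) - u x‖ ^ 2)).toReal := by
    rw [integral_eq_lintegral_of_nonneg_ae (Filter.Eventually.of_forall fun x => by positivity)
      hfc.aestronglyMeasurable]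
  rw [heq]
  have := ENNReal.toReal_mono (by
      exact ENNReal.mul_ne_top ENNReal.ofReal_ne_top hLGne) hmain
  rw [ENNReal.toReal_mul, hLG, ENNReal.toReal_ofReal (by positivity),
    ENNReal.toReal_ofReal (integral_nonneg (gradSq_nonneg u))] at this
  exact this

private lemma phi_diff (u : E2 → E2) (hc : Continuous u) (hs : HasCompactSupport u) (h : E2) :
    (∫ x : E2, (inner ℝ (u x) (u (x + h)) : ℝ)) - ∫ x : E2, ‖u x‖ ^ 2
      = -(1/2) * ∫ x : E2, ‖u (x + h) - u x‖ ^ 2 := by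
  have hsq_int : Integrable fun x : E2 => ‖u x‖ ^ 2 :=
    ((hc.norm).pow 2).integrable_of_hasCompactSupport
      (hs.mono (fun x hx => by
        simp only [Function.mem_support] at hx ⊢
        intro hz; exact hx (by simp [hz])))
  have htr_int : Integrable fun x : E2 => ‖u (x + h)‖ ^ 2 := by
    have := hsq_int.comp_add_right h
    exact this
  have hdc : Continuous fun x : E2 => u (x + h) - u x :=
    (hc.comp (continuous_id.add continuous_const)).sub hc
  have hdcs : HasCompactSupport fun x : E2 => u (x + h) - u x :=
    (hs.comp_homeomorph (Homeomorph.addRight h)).comp₂_left hs (sub_zero 0)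
  have hdiff_int : Integrable fun x : E2 => ‖u (x + h) - u x‖ ^ 2 :=
    ((hdc.norm).pow 2).integrable_of_hasCompactSupport
      (hdcs.mono (fun x hx => by
        simp only [Function.mem_support] at hx ⊢
        intro hz; exact hx (by simp [hz])))
  have hinner_int : Integrable fun x : E2 => (inner ℝ (u x) (u (x + h)) : ℝ) := by
    refine (hc.inner (hc.comp (continuous_id.add continuous_const))).integrable_of_hasCompactSupport
      (hs.mono (fun x hx => ?_))
    simp only [Function.mem_support] at hx ⊢
    intro hz; exact hx (by simp [hz])
  have hpt : ∀ x : E2, (inner ℝ (u x) (u (x + h)) : ℝ)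
      = (1/2) * (‖u x‖ ^ 2 + ‖u (x + h)‖ ^ 2 - ‖u (x + h) - u x‖ ^ 2) := by
    intro x
    have := @norm_sub_sq_real E2 _ _ (u (x + h)) (u x)
    have hcomm : (inner ℝ (u (x + h)) (u x) : ℝ) = inner ℝ (u x) (u (x + h)) := real_inner_comm _ _
    linarith [this, hcomm]
  calc (∫ x : E2, (inner ℝ (u x) (u (x + h)) : ℝ)) - ∫ x : E2, ‖u x‖ ^ 2
      = (∫ x : E2, (1/2) * (‖u x‖ ^ 2 + ‖u (x + h)‖ ^ 2 - ‖u (x + h) - u x‖ ^ 2))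
          - ∫ x : E2, ‖u x‖ ^ 2 := by
        congr 1
        exact integral_congr_ae (Filter.Eventually.of_forall hpt)
    _ = (1/2) * ((∫ x : E2, ‖u x‖ ^ 2) + (∫ x : E2, ‖u (x + h)‖ ^ 2)
          - ∫ x : E2, ‖u (x + h) - u x‖ ^ 2) - ∫ x : E2, ‖u x‖ ^ 2 := by
        rw [MeasureTheory.integral_const_mul]
        congr 1
        have hF : Integrable (fun x : E2 => ‖u x‖ ^ 2 + ‖u (x + h)‖ ^ 2) :=
          hsq_int.add htr_int
        rw [integral_sub hF hdiff_int, integral_add hsq_int htr_int]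
    _ = -(1/2) * ∫ x : E2, ‖u (x + h) - u x‖ ^ 2 := by
        have h4eq : (∫ x : E2, ‖u (x + h)‖ ^ 2) = ∫ x : E2, ‖u x‖ ^ 2 :=
          integral_add_right_eq_self (fun x : E2 => ‖u x‖ ^ 2) h
        rw [h4eq]; ring

private lemma phi_cont (u : E2 → E2) (hc : Continuous u) (hs : HasCompactSupport u) :
    Continuous fun h : E2 => ∫ x : E2, (inner ℝ (u x) (u (x + h)) : ℝ) := by
  obtain ⟨M, hM⟩ : ∃ M, ∀ y, ‖u y‖ ≤ M := by
    obtain ⟨M, hM⟩ := (hs.isCompact_range hc).isBounded.exists_norm_le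
    exact ⟨M, fun y => hM _ (Set.mem_range_self y)⟩
  refine continuous_of_dominated (bound := fun x => ‖u x‖ * M)
    (fun h => ((hc.inner (hc.comp (continuous_id.add continuous_const))).aestronglyMeasurable))
    (fun h => Filter.Eventually.of_forall fun x => ?_)
    ((hc.norm.integrable_of_hasCompactSupport hs.norm).mul_const M)
    (Filter.Eventually.of_forall fun x => ?_)
  · calc ‖(inner ℝ (u x) (u (x + h)) : ℝ)‖ ≤ ‖u x‖ * ‖u (x + h)‖ := norm_inner_le_norm _ _
      _ ≤ ‖u x‖ * M := by
          exact mul_le_mul_of_nonneg_left (hM _) (norm_nonneg _)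
  · exact continuous_const.inner (hc.comp (continuous_const.add continuous_id))

theorem GammaBar_quadratic_increment_bound :
    ∃ C : ℝ, 0 < C ∧
      ∀ (u : E2 → E2), ContDiff ℝ (⊤ : ℕ∞) u → HasCompactSupport u →
        (∀ x, pd 0 (fun y => u y 0) x + pd 1 (fun y => u y 1) x = 0) →
        ∀ l : ℝ, 0 ≤ l →
          |GammaBar u l - GammaBar u 0| ≤ C * l ^ 2 * ∫ x : E2, gradSq u x := by
  refine ⟨1, one_pos, fun u hu hs _ l hl => ?_⟩
  have huc : Continuous u := hu.continuous
  set IG : ℝ := ∫ x : E2, gradSq u x with hIGdef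
  have hIG0 : 0 ≤ IG := integral_nonneg (gradSq_nonneg u)
  set Φ0 : ℝ := ∫ x : E2, ‖u x‖ ^ 2 with hΦ0def
  -- pointwise estimate for the inner integral
  have hkey : ∀ h : E2, |(∫ x : E2, (inner ℝ (u x) (u (x + h)) : ℝ)) - Φ0|
      ≤ (1/2) * ‖h‖ ^ 2 * IG := by
    intro h
    rw [phi_diff u huc hs h]
    have h1 : (0:ℝ) ≤ ∫ x : E2, ‖u (x + h) - u x‖ ^ 2 :=
      integral_nonneg fun x => by positivity
    have h2 := key_L2_bound u hu hs h
    rw [abs_mul, abs_of_nonneg h1]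
    rw [show |(-(1/2) : ℝ)| = 1/2 by norm_num]
    nlinarith
  -- the sphere measure
  haveI : IsFiniteMeasure sphσ := by unfold sphσ; infer_instance
  have hσuniv_ne : sphσ Set.univ ≠ 0 := by
    unfold sphσ
    rw [Measure.toSphere_apply_univ]
    refine mul_ne_zero ?_ ?_
    · simp [finrank_euclideanSpace_fin]
    · exact (measure_ball_pos _ _ one_pos).ne'
  haveI : NeZero sphσ := ⟨by
    intro h0
    exact hσuniv_ne (by rw [h0]; rfl)⟩
  set c : ℝ := (sphσ Set.univ).toReal with hcdef
  have hc_pos : 0 < c := ENNReal.toReal_pos hσuniv_ne (measure_ne_top _ _)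
  -- Γ̄(0) = Φ0
  have hG0 : GammaBar u 0 = Φ0 := by
    have : (fun n : Metric.sphere (0 : E2) 1 =>
        ∫ x : E2, (inner ℝ (u x) (u (x + (0:ℝ) • (n : E2))) : ℝ)) = fun _ => Φ0 := by
      funext n
      simp only [zero_smul, add_zero]
      exact integral_congr_ae (Filter.Eventually.of_forall fun x => real_inner_self_eq_norm_sq _)
    rw [GammaBar, this, average_const]
  -- the function on the sphere
  set F : Metric.sphere (0 : E2) 1 → ℝ :=
    fun n => ∫ x : E2, (inner ℝ (u x) (u (x + l • (n : E2))) : ℝ) with hFdef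
  have hFc : Continuous F :=
    (phi_cont u huc hs).comp (continuous_subtype_val.const_smul l)
  have hFint : Integrable F sphσ := by
    apply Continuous.integrable_of_hasCompactSupport hFc
    exact IsCompact.of_isClosed_subset isCompact_univ (isClosed_tsupport F) (Set.subset_univ _)
  have hFbound : ∀ n : Metric.sphere (0 : E2) 1, |F n - Φ0| ≤ (1/2) * l ^ 2 * IG := by
    intro n
    have hn : ‖(n : E2)‖ = 1 := mem_sphere_zero_iff_norm.mp n.2
    have := hkey (l • (n : E2))
    rw [norm_smul, hn, mul_one, Real.norm_eq_abs, abs_of_nonneg hl] at this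
    exact this
  -- average computation
  have hGl : GammaBar u l = c⁻¹ * ∫ n, F n ∂sphσ := by
    rw [GammaBar, average_eq, smul_eq_mul]; rfl
  have hsub : (∫ n, (F n - Φ0) ∂sphσ) = (∫ n, F n ∂sphσ) - c * Φ0 := by
    rw [integral_sub hFint (integrable_const _), MeasureTheory.integral_const, smul_eq_mul]; rfl
  have hdiffeq : GammaBar u l - GammaBar u 0 = c⁻¹ * ∫ n, (F n - Φ0) ∂sphσ := by
    rw [hGl, hG0, hsub]
    field_simp
  rw [hdiffeq, abs_mul, abs_of_nonneg (inv_nonneg.mpr hc_pos.le)]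
  have habs : |∫ n, (F n - Φ0) ∂sphσ| ≤ ∫ n, |F n - Φ0| ∂sphσ := by
    simpa [Real.norm_eq_abs] using
      norm_integral_le_integral_norm (μ := sphσ) (fun n => F n - Φ0)
  have hint : (∫ n, |F n - Φ0| ∂sphσ) ≤ ∫ _n, (1/2) * l ^ 2 * IG ∂sphσ :=
    integral_mono (hFint.sub (integrable_const _)).abs (integrable_const _)
      fun n => hFbound n
  have hconst : (∫ _n, (1/2) * l ^ 2 * IG ∂sphσ) = c * ((1/2) * l ^ 2 * IG) := by
    rw [MeasureTheory.integral_const, smul_eq_mul]; rfl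
  calc c⁻¹ * |∫ n, (F n - Φ0) ∂sphσ| ≤ c⁻¹ * (c * ((1/2) * l ^ 2 * IG)) := by
        apply mul_le_mul_of_nonneg_left _ (inv_nonneg.mpr hc_pos.le)
        calc |∫ n, (F n - Φ0) ∂sphσ| ≤ ∫ n, |F n - Φ0| ∂sphσ := habs
          _ ≤ ∫ _n, (1/2) * l ^ 2 * IG ∂sphσ := hint
          _ = c * ((1/2) * l ^ 2 * IG) := hconst
    _ = (1/2) * l ^ 2 * IG := by field_simp
    _ ≤ 1 * l ^ 2 * IG := by nlinarith [sq_nonneg l]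

end
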